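/- Let G_1 and G_2 be 𝓛-cospectral connected r-regular graphs (r ≥ 2) on n vertices, and for each i = 1,…,n let H_i and H_i' be 𝓛-cospectral r_1-regular graphs on t ≥ 1 vertices. Then the generalized subdivision-vertex coronas S(G_1)⊙∧_{i=1}^n H_i and S(G_2)⊙∧_{i=1}^n H_i' are 𝓛-cospectral. -/

import Mathlib

open Matrix Polynomial

/-- Adjacency matrix over `ℝ` (with classical decidability). -/
noncomputable def adjM {V : Type*} [Fintype V] [DecidableEq V] (G : SimpleGraph V) :
    Matrix V V ℝ :=
  letI : DecidableRel G.Adj := Classical.decRel _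
  G.adjMatrix ℝ

/-- Degree of a vertex (with classical decidability). -/
noncomputable def cdeg {V : Type*} [Fintype V] (G : SimpleGraph V) (v : V) : ℕ :=
  letI : DecidableRel G.Adj := Classical.decRel _
  G.degree v

/-- The normalized Laplacian `𝓛(G) = I - D^{-1/2} A D^{-1/2}` of a finite graph. -/
noncomputable def normLap {V : Type*} [Fintype V] [DecidableEq V] (G : SimpleGraph V) :
    Matrix V V ℝ :=
  1 - Matrix.diagonal (fun v => (Real.sqrt (cdeg G v))⁻¹) * adjM G
      * Matrix.diagonal (fun v => (Real.sqrt (cdeg G v))⁻¹)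

/-- The generalized subdivision-vertex corona `S(G) ⊙ ∧ᵢ Hᵢ`: take the subdivision `S(G)`
(vertices of `G` together with one inserted vertex per edge, each edge `uv` replaced by the
path `u–e–v`), add a disjoint copy of each `Hᵢ`, and join the `i`-th vertex of `G` to every
vertex of `Hᵢ`. -/
def svc {n : ℕ} (G : SimpleGraph (Fin n)) (t : Fin n → ℕ)
    (H : ∀ i : Fin n, SimpleGraph (Fin (t i))) :
    SimpleGraph (Fin n ⊕ (G.edgeSet ⊕ Σ i : Fin n, Fin (t i))) :=
  SimpleGraph.fromRel (fun a b =>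
    match a, b with
    | Sum.inl v, Sum.inr (Sum.inl e) => v ∈ (e : Sym2 (Fin n))
    | Sum.inl v, Sum.inr (Sum.inr ⟨i, _⟩) => v = i
    | Sum.inr (Sum.inr ⟨i, w⟩), Sum.inr (Sum.inr ⟨j, w'⟩) =>
        ∃ h : i = j, (H j).Adj (h ▸ w) w'
    | _, _ => False)

/-!
Order the vertices of `S(G) ⊙ ∧ᵢ Hᵢ` as (vertices of `G`, inserted vertices, copies of the `Hᵢ`).
When `G` is `r`-regular and every `Hᵢ` is `r₁`-regular, the degree is constant on each part, so
`𝓛 = I - N` where the only nonzero blocks of `N` are `c • ⊕ᵢ A(Hᵢ)` on the copies and the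
off-diagonal blocks `a • R` (vertex–edge incidence, `R Rᵀ = A(G) + r I`) and `b • C`
(`C Cᵀ = t I`, `(⊕ᵢ A(Hᵢ)) Cᵀ = r₁ Cᵀ`). A polynomial is determined by its value at an `x`
transcendental over `ℝ`, and at such an `x` every block that has to be inverted is invertible, so
the Schur complement with respect to the inserted vertices and the copies factors `det(x I - 𝓛)` as
`(x - 1)^|E(G)| · ∏ᵢ det((x - 1) I + c A(Hᵢ)) · det(α I + β A(G))`.
For an `r`-regular graph `A = r (I - 𝓛)`, so each factor is determined by the `𝓛`-spectrum of
the graph it involves, and `|E(G)| = n r / 2`.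
-/

namespace Matrix

variable {ι : Type*} [Fintype ι] [DecidableEq ι]

theorem aeval_charpoly_eq_det {R K : Type*} [CommRing R] [CommRing K] [Algebra R K]
    (P : Matrix ι ι R) (x : K) :
    aeval x P.charpoly = (x • 1 - P.map (algebraMap R K)).det := by
  rw [aeval_def, ← eval_map, ← charpoly_map, eval_charpoly, smul_one_eq_diagonal, scalar_apply]

theorem aeval_charpoly_one_sub_eq_det {R K : Type*} [CommRing R] [CommRing K] [Algebra R K]
    (P : Matrix ι ι R) (x : K) :
    aeval x (1 - P).charpoly = ((x - 1) • 1 + P.map (algebraMap R K)).det := by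
  rw [aeval_charpoly_eq_det, Matrix.map_sub _ (map_sub _),
    Matrix.map_one _ (map_zero _) (map_one _), sub_smul, one_smul]
  abel_nf

theorem det_smul_one_add_smul_map_eq_of_charpoly_eq {R K : Type*} [CommRing R] [Field K]
    [Algebra R K] {P Q : Matrix ι ι R} (h : P.charpoly = Q.charpoly) (α β : K) :
    (α • 1 + β • P.map (algebraMap R K)).det = (α • 1 + β • Q.map (algebraMap R K)).det := by
  rcases eq_or_ne β 0 with rfl | hβ
  · simp
  have hfactor (M : Matrix ι ι R) : α • 1 + β • M.map (algebraMap R K)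
      = (-β) • ((-(α / β)) • 1 - M.map (algebraMap R K)) := by
    rw [smul_sub, smul_smul, neg_mul_neg, mul_div_cancel₀ α hβ, neg_smul, sub_neg_eq_add]
  rw [hfactor P, hfactor Q, det_smul, det_smul, ← aeval_charpoly_eq_det, ← aeval_charpoly_eq_det, h]

theorem det_blockDiagonal' {R κ : Type*} [CommRing R] [Fintype κ] [DecidableEq κ]
    (M : ι → Matrix κ κ R) : (blockDiagonal' M).det = ∏ i, (M i).det := by
  let e : κ × ι ≃ Σ _ : ι, κ := (Equiv.prodComm κ ι).trans (Equiv.sigmaEquivProd ι κ).symm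
  rw [← det_submatrix_equiv_self e, ← det_blockDiagonal]
  rfl

theorem map_algebraMap_smul {R K m l : Type*} [CommSemiring R] [Semiring K] [Algebra R K]
    (c : R) (M : Matrix m l R) :
    (c • M).map (algebraMap R K) = algebraMap R K c • M.map (algebraMap R K) :=
  Matrix.map_smulₛₗ _ _ _ (fun _ => map_mul _ _ _) M

theorem det_smul_one_add_map_smul_blockDiagonal' {R K κ : Type*} [CommRing R] [CommRing K]
    [Algebra R K] [Fintype κ] [DecidableEq κ] (y : K) (c : R) (M : ι → Matrix κ κ R) :
    (y • 1 + (c • blockDiagonal' M).map (algebraMap R K)).det =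
      ∏ i, (y • 1 + algebraMap R K c • (M i).map (algebraMap R K)).det := by
  rw [← det_blockDiagonal', map_algebraMap_smul]
  congr 1
  ext ⟨i, k⟩ ⟨j, k'⟩
  rcases eq_or_ne i j with rfl | hij
  · simp [one_apply]
  · simp [blockDiagonal'_apply_ne _ _ _ hij, hij]

theorem smul_one_add_map_smul_mul_map {R K l : Type*} [CommRing R] [CommRing K] [Algebra R K]
    (y : K) (c d : R) {A : Matrix ι ι R} {B : Matrix ι l R} (h : A * B = d • B) :
    (y • 1 + (c • A).map (algebraMap R K)) * B.map (algebraMap R K) =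
      (y + algebraMap R K (c * d)) • B.map (algebraMap R K) := by
  rw [Matrix.add_mul, Matrix.smul_mul, Matrix.one_mul, ← Matrix.map_mul, Matrix.smul_mul, h,
    smul_smul, map_algebraMap_smul, add_smul]

theorem det_fromBlocks_fromCols_fromRows {K m e w : Type*} [Field K] [Fintype m] [DecidableEq m]
    [Fintype e] [DecidableEq e] [Fintype w] [DecidableEq w] {y z : K} (hy : y ≠ 0) (hz : z ≠ 0)
    (B : Matrix m e K) (B' : Matrix e m K) (C : Matrix m w K) (C' : Matrix w m K)
    (D : Matrix w w K) (hD : D.det ≠ 0) (hDC : D * C' = z • C') :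
    (fromBlocks (y • 1) (fromCols B C) (fromRows B' C') (fromBlocks (y • 1) 0 0 D)).det
      = y ^ Fintype.card e * D.det * (y • 1 - y⁻¹ • (B * B') - z⁻¹ • (C * C')).det := by
  set D₀ := fromBlocks (y • (1 : Matrix e e K)) 0 0 D
  have hdet : D₀.det = y ^ Fintype.card e * D.det := by
    rw [det_fromBlocks_zero₂₁, det_smul, det_one, mul_one]
  have : Invertible D₀ :=
    invertibleOfIsUnitDet _ (hdet ▸ isUnit_iff_ne_zero.2 (mul_ne_zero (pow_ne_zero _ hy) hD))
  have hsolve : ⅟D₀ * fromRows B' C' = fromRows (y⁻¹ • B') (z⁻¹ • C') := by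
    have : D₀ * fromRows (y⁻¹ • B') (z⁻¹ • C') = fromRows B' C' := by
      rw [fromBlocks_mul_fromRows]
      simp [Matrix.mul_smul, hDC, smul_smul, hy, hz]
    rw [← this, ← Matrix.mul_assoc, invOf_mul_self, Matrix.one_mul]
  rw [det_fromBlocks₂₂, hdet, Matrix.mul_assoc, hsolve, fromCols_mul_fromRows, Matrix.mul_smul,
    Matrix.mul_smul, sub_add_eq_sub_sub]

variable {κ : ι → Type*} [∀ i, Fintype (κ i)] {R : Type*} [CommSemiring R]

variable (κ R) in
def sigmaIndicator : Matrix ι (Σ i, κ i) R :=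
  of fun i x => if i = x.1 then 1 else 0

theorem sigmaIndicator_mul_transpose :
    sigmaIndicator κ R * (sigmaIndicator κ R)ᵀ = diagonal fun i => (Fintype.card (κ i) : R) := by
  ext i j
  rw [mul_apply, Fintype.sum_sigma]
  rcases eq_or_ne i j with rfl | hij
  · simp [sigmaIndicator]
  · simp [sigmaIndicator, hij]

theorem blockDiagonal'_mul_transpose_sigmaIndicator {M : ∀ i, Matrix (κ i) (κ i) R} {d : R}
    (hM : ∀ i k, ∑ k', M i k k' = d) :
    blockDiagonal' M * (sigmaIndicator κ R)ᵀ = d • (sigmaIndicator κ R)ᵀ := by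
  ext ⟨i, k⟩ j
  rw [mul_apply, Fintype.sum_sigma, Finset.sum_eq_single i]
  · rcases eq_or_ne j i with rfl | hij
    · simp [sigmaIndicator, hM]
    · simp [sigmaIndicator, hij]
  · intro i' _ hi'
    simp [blockDiagonal'_apply_ne M _ _ hi'.symm]
  · simp

end Matrix

section Transcendental

variable {R K : Type*} [CommRing R] [Nontrivial R] [CommRing K] [Algebra R K] {x : K}

theorem Transcendental.sub_one_add_algebraMap_ne_zero (hx : Transcendental R x) (s : R) :
    x - 1 + algebraMap R K s ≠ 0 := by
  intro h
  apply hx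
  rw [show x = algebraMap R K (1 - s) by rw [map_sub, map_one]; linear_combination h]
  exact isAlgebraic_algebraMap _

theorem Transcendental.det_sub_one_smul_one_add_map_ne_zero {ι : Type*} [Fintype ι]
    [DecidableEq ι] (hx : Transcendental R x) (M : Matrix ι ι R) :
    ((x - 1) • 1 + M.map (algebraMap R K)).det ≠ 0 := by
  rw [← aeval_charpoly_one_sub_eq_det]
  exact fun h => hx ⟨_, (charpoly_monic _).ne_zero, h⟩

end Transcendental

namespace SimpleGraph

variable {V : Type*} (G : SimpleGraph V) [DecidableRel G.Adj]

theorem sum_adjMatrix_apply [Fintype V] {R : Type*} [NonAssocSemiring R] (v : V) :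
    ∑ u, G.adjMatrix R v u = G.degree v := by
  simpa [mulVec, dotProduct] using G.adjMatrix_mulVec_const_apply (a := (1 : R)) (v := v)

theorem sum_edgeSet_eq_sum [Fintype V] {M : Type*} [AddCommMonoid M] (f : Sym2 V → M)
    (hf : ∀ e ∉ G.edgeSet, f e = 0) : ∑ e : G.edgeSet, f e = ∑ e, f e := by
  rw [← Finset.sum_subtype G.edgeFinset (fun _ => mem_edgeFinset) f]
  exact Finset.sum_subset (Finset.subset_univ _) fun e _ he => hf e (by simpa using he)

variable [DecidableEq V] (R : Type*) [Semiring R]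

def edgeIncMatrix : Matrix V G.edgeSet R :=
  of fun v e => if v ∈ (e : Sym2 V) then 1 else 0

variable {R}

theorem edgeIncMatrix_eq_incMatrix (v : V) (e : G.edgeSet) :
    G.edgeIncMatrix R v e = G.incMatrix R v e := by
  simp [edgeIncMatrix, incMatrix_apply', incidenceSet, e.2]

variable [Fintype V]

theorem sum_edgeIncMatrix_apply (v : V) : ∑ e, G.edgeIncMatrix R v e = G.degree v := by
  simp_rw [edgeIncMatrix_eq_incMatrix]
  rw [sum_edgeSet_eq_sum G (G.incMatrix R v) fun e he =>
    incMatrix_of_notMem_incidenceSet G fun h => he h.1, sum_incMatrix_apply]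

theorem edgeIncMatrix_mul_transpose :
    G.edgeIncMatrix R * (G.edgeIncMatrix R)ᵀ = G.incMatrix R * (G.incMatrix R)ᵀ := by
  ext u v
  simp_rw [mul_apply, transpose_apply, edgeIncMatrix_eq_incMatrix]
  exact sum_edgeSet_eq_sum G (fun e => G.incMatrix R u e * G.incMatrix R v e) fun e he => by
    rw [incMatrix_of_notMem_incidenceSet G fun h => he h.1, zero_mul]

end SimpleGraph

section NormalizedLaplacian

open SimpleGraph

variable {V : Type*} [Fintype V]

theorem cdeg_eq_degree (G : SimpleGraph V) [DecidableRel G.Adj] (v : V) :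
    cdeg G v = G.degree v := by
  unfold cdeg
  congr!

theorem two_mul_card_edgeSet_of_cdeg_eq {G : SimpleGraph V} [DecidableRel G.Adj] {r : ℕ}
    (hG : ∀ v, cdeg G v = r) : 2 * Fintype.card G.edgeSet = Fintype.card V * r := by
  rw [← edgeFinset_card, ← G.sum_degrees_eq_twice_card_edges]
  simp [← cdeg_eq_degree, hG]

variable [DecidableEq V]

theorem adjM_eq_adjMatrix (G : SimpleGraph V) [DecidableRel G.Adj] : adjM G = G.adjMatrix ℝ := by
  unfold adjM
  congr!

theorem sum_adjM_apply (G : SimpleGraph V) (v : V) : ∑ u, adjM G v u = cdeg G v := by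
  classical
  rw [adjM_eq_adjMatrix, cdeg_eq_degree, sum_adjMatrix_apply]

theorem edgeIncMatrix_mul_transpose_eq_adjM_add (G : SimpleGraph V) [DecidableRel G.Adj] {r : ℕ}
    (hG : ∀ v, cdeg G v = r) :
    G.edgeIncMatrix ℝ * (G.edgeIncMatrix ℝ)ᵀ = adjM G + (r : ℝ) • 1 := by
  rw [edgeIncMatrix_mul_transpose, incMatrix_mul_transpose, adjM_eq_adjMatrix]
  ext u v
  rcases eq_or_ne u v with rfl | huv
  · simp [← cdeg_eq_degree, hG]
  · simp [huv, adjMatrix_apply]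

theorem adjM_eq_smul_one_sub_smul_normLap {G : SimpleGraph V} {r : ℕ} (hG : ∀ v, cdeg G v = r) :
    adjM G = (r : ℝ) • 1 - (r : ℝ) • normLap G := by
  classical
  ext u v
  simp only [normLap, hG, smul_sub, sub_sub_cancel]
  rw [Matrix.smul_apply, mul_diagonal, diagonal_mul, adjM_eq_adjMatrix, adjMatrix_apply,
    smul_eq_mul]
  split_ifs with h
  · have hr : (0 : ℝ) < r := by
      rw [← hG u, cdeg_eq_degree]
      exact_mod_cast G.degree_pos_iff_exists_adj u |>.2 ⟨v, h⟩
    field_simp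
    rw [Real.sq_sqrt hr.le]
  · simp

theorem det_smul_one_add_smul_map_adjM_eq {K : Type*} [Field K] [Algebra ℝ K]
    {P Q : SimpleGraph V} {r : ℕ} (hP : ∀ v, cdeg P v = r) (hQ : ∀ v, cdeg Q v = r)
    (h : (normLap P).charpoly = (normLap Q).charpoly) (α β : K) :
    (α • 1 + β • (adjM P).map (algebraMap ℝ K)).det =
      (α • 1 + β • (adjM Q).map (algebraMap ℝ K)).det := by
  have hnormLap (S : SimpleGraph V) (hS : ∀ v, cdeg S v = r) :
      α • 1 + β • (adjM S).map (algebraMap ℝ K) = (α + β * algebraMap ℝ K r) • 1 +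
        (-(β * algebraMap ℝ K r)) • (normLap S).map (algebraMap ℝ K) := by
    rw [adjM_eq_smul_one_sub_smul_normLap hS, Matrix.map_sub _ (map_sub _), map_algebraMap_smul,
      map_algebraMap_smul, Matrix.map_one _ (map_zero _) (map_one _)]
    module
  rw [hnormLap P hP, hnormLap Q hQ, det_smul_one_add_smul_map_eq_of_charpoly_eq h]

end NormalizedLaplacian

section SubdivisionVertexCorona

open SimpleGraph

variable {n : ℕ} (G : SimpleGraph (Fin n)) {t : Fin n → ℕ} (H : ∀ i, SimpleGraph (Fin (t i)))

@[simp] theorem svc_not_adj_inl_inl (u v : Fin n) :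
    ¬ (svc G t H).Adj (.inl u) (.inl v) := by
  simp [svc]

@[simp] theorem svc_adj_inl_edge (v : Fin n) (e : G.edgeSet) :
    (svc G t H).Adj (.inl v) (.inr (.inl e)) ↔ v ∈ (e : Sym2 (Fin n)) := by
  simp [svc]

@[simp] theorem svc_adj_inl_copy (v i : Fin n) (w : Fin (t i)) :
    (svc G t H).Adj (.inl v) (.inr (.inr ⟨i, w⟩)) ↔ v = i := by
  simp [svc]

@[simp] theorem svc_not_adj_edge_edge (e e' : G.edgeSet) :
    ¬ (svc G t H).Adj (.inr (.inl e)) (.inr (.inl e')) := by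
  simp [svc]

@[simp] theorem svc_not_adj_edge_copy (e : G.edgeSet) (i : Fin n) (w : Fin (t i)) :
    ¬ (svc G t H).Adj (.inr (.inl e)) (.inr (.inr ⟨i, w⟩)) := by
  simp [svc]

@[simp] theorem svc_adj_edge_inl (v : Fin n) (e : G.edgeSet) :
    (svc G t H).Adj (.inr (.inl e)) (.inl v) ↔ v ∈ (e : Sym2 (Fin n)) := by
  simp [svc]

@[simp] theorem svc_adj_copy_inl (v i : Fin n) (w : Fin (t i)) :
    (svc G t H).Adj (.inr (.inr ⟨i, w⟩)) (.inl v) ↔ v = i := by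
  simp [svc]

@[simp] theorem svc_not_adj_copy_edge (e : G.edgeSet) (i : Fin n) (w : Fin (t i)) :
    ¬ (svc G t H).Adj (.inr (.inr ⟨i, w⟩)) (.inr (.inl e)) := by
  simp [svc]

@[simp] theorem svc_adj_copy_copy (i : Fin n) (w w' : Fin (t i)) :
    (svc G t H).Adj (.inr (.inr ⟨i, w⟩)) (.inr (.inr ⟨i, w'⟩)) ↔ (H i).Adj w w' := by
  simpa [svc, (H i).adj_comm w'] using fun h : (H i).Adj w w' => h.ne

theorem svc_not_adj_copy_copy {i j : Fin n} (hij : i ≠ j) (w : Fin (t i)) (w' : Fin (t j)) :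
    ¬ (svc G t H).Adj (.inr (.inr ⟨i, w⟩)) (.inr (.inr ⟨j, w'⟩)) := by
  simp [svc, hij, hij.symm]

variable [DecidableRel G.Adj]

theorem cdeg_svc_inl (v : Fin n) : cdeg (svc G t H) (.inl v) = cdeg G v + t v := by
  classical
  rw [cdeg_eq_degree, cdeg_eq_degree, ← Nat.cast_id (degree _ _), ← sum_adjMatrix_apply,
    Fintype.sum_sum_type, Fintype.sum_sum_type, Fintype.sum_sigma, ← Nat.cast_id (G.degree v),
    ← G.sum_edgeIncMatrix_apply]
  simp [adjMatrix_apply, edgeIncMatrix]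

theorem cdeg_svc_edge (e : G.edgeSet) : cdeg (svc G t H) (.inr (.inl e)) = 2 := by
  classical
  rw [cdeg_eq_degree, ← Nat.cast_id (degree _ _), ← sum_adjMatrix_apply, Fintype.sum_sum_type,
    Fintype.sum_sum_type, Fintype.sum_sigma, ← G.sum_incMatrix_apply_of_mem_edgeSet e.2]
  simp [adjMatrix_apply, incMatrix_apply', incidenceSet, e.2]

theorem cdeg_svc_copy (i : Fin n) (w : Fin (t i)) :
    cdeg (svc G t H) (.inr (.inr ⟨i, w⟩)) = cdeg (H i) w + 1 := by
  classical
  have hcopies : ∑ x : Σ j, Fin (t j),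
      (svc G t H).adjMatrix ℕ (.inr (.inr ⟨i, w⟩)) (.inr (.inr x)) =
        ∑ w', (H i).adjMatrix ℕ w w' := by
    rw [Fintype.sum_sigma, Finset.sum_eq_single i (fun j _ hj => by
      simp [adjMatrix_apply, svc_not_adj_copy_copy G H hj.symm]) (by simp)]
    simp [adjMatrix_apply]
  rw [cdeg_eq_degree, cdeg_eq_degree, ← Nat.cast_id (degree _ _), ← sum_adjMatrix_apply,
    ← Nat.cast_id ((H i).degree w), ← sum_adjMatrix_apply, Fintype.sum_sum_type,
    Fintype.sum_sum_type, hcopies]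
  simp [adjMatrix_apply, add_comm]

end SubdivisionVertexCorona

section SubdivisionVertexCoronaCharpoly

open SimpleGraph

variable {n r t r₁ : ℕ} (G : SimpleGraph (Fin n)) [DecidableRel G.Adj]
  (H : Fin n → SimpleGraph (Fin t))

theorem normLap_svc (hG : ∀ v, cdeg G v = r) (hH : ∀ i w, cdeg (H i) w = r₁) :
    normLap (svc G (fun _ => t) H) = 1 - fromBlocks 0
      (fromCols (((√(r + t : ℝ))⁻¹ * (√2)⁻¹) • G.edgeIncMatrix ℝ)
        (((√(r + t : ℝ))⁻¹ * (√(r₁ + 1 : ℝ))⁻¹) • sigmaIndicator (fun _ : Fin n => Fin t) ℝ))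
      (fromRows (((√(r + t : ℝ))⁻¹ * (√2)⁻¹) • (G.edgeIncMatrix ℝ)ᵀ)
        (((√(r + t : ℝ))⁻¹ * (√(r₁ + 1 : ℝ))⁻¹) • (sigmaIndicator (fun _ : Fin n => Fin t) ℝ)ᵀ))
      (fromBlocks 0 0 0 ((r₁ + 1 : ℝ)⁻¹ • blockDiagonal' fun i => adjM (H i))) := by
  classical
  have hsq : (√(r₁ + 1 : ℝ))⁻¹ * (√(r₁ + 1 : ℝ))⁻¹ = (r₁ + 1 : ℝ)⁻¹ := by
    rw [← mul_inv, Real.mul_self_sqrt (by positivity)]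
  unfold normLap
  congr 1
  ext x y
  rw [mul_diagonal, diagonal_mul, adjM_eq_adjMatrix, adjMatrix_apply]
  rcases x with v | e | ⟨i, w⟩ <;> rcases y with v' | e' | ⟨j, w'⟩ <;>
    simp [cdeg_svc_inl, cdeg_svc_edge, cdeg_svc_copy, hG, hH, edgeIncMatrix, sigmaIndicator,
      mul_comm]
  rcases eq_or_ne i j with rfl | hij
  · simp [adjM_eq_adjMatrix, adjMatrix_apply, hsq]
  · simp [svc_not_adj_copy_copy _ _ hij, blockDiagonal'_apply_ne _ _ _ hij]

theorem aeval_charpoly_one_sub_fromBlocks_incidence {K : Type*} [Field K] [Algebra ℝ K] {x : K}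
    (hx : Transcendental ℝ x) (hG : ∀ v, cdeg G v = r) (hH : ∀ i w, cdeg (H i) w = r₁)
    (a b c : ℝ) :
    aeval x (1 - fromBlocks 0
      (fromCols (a • G.edgeIncMatrix ℝ) (b • sigmaIndicator (fun _ : Fin n => Fin t) ℝ))
      (fromRows (a • (G.edgeIncMatrix ℝ)ᵀ) (b • (sigmaIndicator (fun _ : Fin n => Fin t) ℝ)ᵀ))
      (fromBlocks 0 0 0 (c • blockDiagonal' fun i => adjM (H i)))).charpoly =
    (x - 1) ^ Fintype.card G.edgeSet *
      (∏ i, ((x - 1) • 1 + algebraMap ℝ K c • (adjM (H i)).map (algebraMap ℝ K)).det) *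
      ((x - 1 - algebraMap ℝ K (a ^ 2 * r) / (x - 1)
          - algebraMap ℝ K (b ^ 2 * t) / (x - 1 + algebraMap ℝ K (c * r₁))) • 1
        + (-(algebraMap ℝ K (a ^ 2) / (x - 1))) • (adjM G).map (algebraMap ℝ K)).det := by
  classical
  set f := algebraMap ℝ K
  set E := G.edgeIncMatrix ℝ
  set C := sigmaIndicator (fun _ : Fin n => Fin t) ℝ
  set A : Matrix (Σ _ : Fin n, Fin t) (Σ _ : Fin n, Fin t) ℝ := blockDiagonal' fun i => adjM (H i)
  set D := (x - 1) • 1 + (c • A).map f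
  have hy : x - 1 ≠ 0 := by simpa using hx.sub_one_add_algebraMap_ne_zero 0
  have hDdet : D.det = ∏ i, ((x - 1) • 1 + f c • (adjM (H i)).map f).det :=
    det_smul_one_add_map_smul_blockDiagonal' _ _ _
  have hDdet_ne : D.det ≠ 0 := by
    rw [hDdet, Finset.prod_ne_zero_iff]
    intro i _
    rw [← map_algebraMap_smul]
    exact hx.det_sub_one_smul_one_add_map_ne_zero _
  have hAC : A * Cᵀ = (r₁ : ℝ) • Cᵀ :=
    blockDiagonal'_mul_transpose_sigmaIndicator fun i w => by rw [sum_adjM_apply, hH]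
  have hDC : D * (b • Cᵀ).map f = (x - 1 + f (c * r₁)) • (b • Cᵀ).map f :=
    smul_one_add_map_smul_mul_map _ _ _ (by rw [Matrix.mul_smul, hAC, smul_comm])
  have hblocks : (x - 1) • 1 + (fromBlocks 0 (fromCols (a • E) (b • C))
        (fromRows (a • Eᵀ) (b • Cᵀ)) (fromBlocks 0 0 0 (c • A))).map f =
      fromBlocks ((x - 1) • 1) (fromCols ((a • E).map f) ((b • C).map f))
        (fromRows ((a • Eᵀ).map f) ((b • Cᵀ).map f)) (fromBlocks ((x - 1) • 1) 0 0 D) := by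
    simp [fromBlocks_map, fromCols_map, fromRows_map, ← fromBlocks_one, fromBlocks_smul,
      fromBlocks_add, D]
  have hEE : E * Eᵀ = adjM G + (r : ℝ) • 1 := edgeIncMatrix_mul_transpose_eq_adjM_add G hG
  have hCC : C * Cᵀ = diagonal fun _ => (t : ℝ) := by
    simpa using sigmaIndicator_mul_transpose (κ := fun _ : Fin n => Fin t) (R := ℝ)
  rw [aeval_charpoly_one_sub_eq_det, hblocks, det_fromBlocks_fromCols_fromRows hy
    (hx.sub_one_add_algebraMap_ne_zero _) _ _ _ _ D hDdet_ne hDC, hDdet, ← Matrix.map_mul,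
    ← Matrix.map_mul]
  simp only [Matrix.smul_mul, Matrix.mul_smul, smul_smul, hEE, hCC]
  congr 2
  ext u v
  rcases eq_or_ne u v with rfl | huv
  · simp
    ring
  · simp [huv]
    ring

end SubdivisionVertexCoronaCharpoly

theorem stmt12_general {n r t r1 : ℕ}
    (G₁ G₂ : SimpleGraph (Fin n)) [DecidableRel G₁.Adj] [DecidableRel G₂.Adj]
    (hreg₁ : ∀ v, cdeg G₁ v = r) (hreg₂ : ∀ v, cdeg G₂ v = r)
    (hG : (normLap G₁).charpoly = (normLap G₂).charpoly)
    (H H' : Fin n → SimpleGraph (Fin t))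
    (hH : ∀ i w, cdeg (H i) w = r1) (hH' : ∀ i w, cdeg (H' i) w = r1)
    (hcosp : ∀ i, (normLap (H i)).charpoly = (normLap (H' i)).charpoly) :
    (normLap (svc G₁ (fun _ => t) H)).charpoly
      = (normLap (svc G₂ (fun _ => t) H')).charpoly := by
  have hx := RatFunc.transcendental_X (K := ℝ)
  have hcard : Fintype.card G₁.edgeSet = Fintype.card G₂.edgeSet := by
    have := two_mul_card_edgeSet_of_cdeg_eq hreg₁
    have := two_mul_card_edgeSet_of_cdeg_eq hreg₂
    omega
  apply transcendental_iff_injective.1 hx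
  rw [normLap_svc G₁ H hreg₁ hH, normLap_svc G₂ H' hreg₂ hH',
    aeval_charpoly_one_sub_fromBlocks_incidence G₁ H hx hreg₁ hH,
    aeval_charpoly_one_sub_fromBlocks_incidence G₂ H' hx hreg₂ hH', hcard]
  congr 1
  · congr 1
    exact Finset.prod_congr rfl fun i _ =>
      det_smul_one_add_smul_map_adjM_eq (hH i) (hH' i) (hcosp i) _ _
  · exact det_smul_one_add_smul_map_adjM_eq hreg₁ hreg₂ hG _ _

theorem stmt12 {n r t r1 : ℕ} (hr : 2 ≤ r) (ht : 1 ≤ t)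
    (G₁ G₂ : SimpleGraph (Fin n)) [DecidableRel G₁.Adj] [DecidableRel G₂.Adj]
    (hconn₁ : G₁.Connected) (hconn₂ : G₂.Connected)
    (hreg₁ : ∀ v, cdeg G₁ v = r) (hreg₂ : ∀ v, cdeg G₂ v = r)
    (hG : (normLap G₁).charpoly = (normLap G₂).charpoly)
    (H H' : Fin n → SimpleGraph (Fin t))
    (hH : ∀ i w, cdeg (H i) w = r1) (hH' : ∀ i w, cdeg (H' i) w = r1)
    (hcosp : ∀ i, (normLap (H i)).charpoly = (normLap (H' i)).charpoly) :
    (normLap (svc G₁ (fun _ => t) H)).charpoly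
      = (normLap (svc G₂ (fun _ => t) H')).charpoly :=
  stmt12_general G₁ G₂ hreg₁ hreg₂ hG H H' hH hH' hcosp
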